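/- arXiv:2004.01923 — 4 statements merged into one kernel-verified Lean document; each statement's English description precedes it below -/
import Mathlib

section
/- Suppose F_{Y|X}(y|x) = F_ε((h(y)-g(x))/σ(x)) as above, v : ℝ^d → [0,∞) is an integrable weight function, and define λ(y) := ∫ v(x) · [(∂F_{Y|X}/∂x_j)(y|x) / (∂F_{Y|X}/∂y)(y|x)] dx, A := ∫ v(x)·(σ(x)·∂_j g(x) - g(x)·∂_j σ(x))/σ(x) dx, and B := ∫ v(x)·∂_j σ(x)/σ(x) dx, where all integrals are finite. Then λ(y) = -(A + B·h(y))/h'(y) for all y. -/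
/-! The partial derivatives of `F_ε((h(y) - g(x))/σ(x))` in `x_j` and in `y` share the factor
`f_ε((h(y) - g(x))/σ(x))`, which cancels in their ratio. What remains,
`-(σ ∂_j g + (h(y) - g) ∂_j σ) / (σ h'(y))`, is affine in `h(y)`, so integrating it against `v`
splits into `A` and `B · h(y)`. -/

open MeasureTheory

theorem HasDerivAt.comp_sub_div {F G S : ℝ → ℝ} {F' G' S' c t : ℝ}
    (hF : HasDerivAt F F' ((c - G t) / S t)) (hG : HasDerivAt G G' t) (hS : HasDerivAt S S' t)
    (hSt : S t ≠ 0) :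
    HasDerivAt (fun u => F ((c - G u) / S u)) (F' * ((-G' * S t - (c - G t) * S') / S t ^ 2)) t := by
  have hquot := ((hasDerivAt_const t c).sub hG).div hS hSt
  rw [zero_sub] at hquot
  exact hF.comp t hquot

theorem deriv_div_deriv_comp_sub_div {F H G S : ℝ → ℝ} {F' H' G' S' y t : ℝ}
    (hF : HasDerivAt F F' ((H y - G t) / S t)) (hF' : F' ≠ 0)
    (hH : HasDerivAt H H' y) (hG : HasDerivAt G G' t) (hS : HasDerivAt S S' t) (hSt : S t ≠ 0) :
    deriv (fun u => F ((H y - G u) / S u)) t / deriv (fun z => F ((H z - G t) / S t)) y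
      = -((S t * G' - G t * S') / S t + S' / S t * H y) / H' := by
  have hy : HasDerivAt (fun z => F ((H z - G t) / S t)) (F' * (H' / S t)) y :=
    hF.comp y ((hH.sub_const (G t)).div_const (S t))
  rw [(hF.comp_sub_div hG hS hSt).deriv, hy.deriv, mul_div_mul_left _ _ hF', div_div_eq_mul_div]
  field_simp
  ring

theorem stmt4_general {d : ℕ} (j : Fin d)
    (h h' : ℝ → ℝ) (g σ : (Fin d → ℝ) → ℝ)
    (gj σj : (Fin d → ℝ) → ℝ) (Fε fε : ℝ → ℝ) (v : (Fin d → ℝ) → ℝ)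
    (hderiv : ∀ y, HasDerivAt h (h' y) y)
    (hgj : ∀ x : Fin d → ℝ, HasDerivAt (fun t => g (Function.update x j t)) (gj x) (x j))
    (hσj : ∀ x : Fin d → ℝ, HasDerivAt (fun t => σ (Function.update x j t)) (σj x) (x j))
    (hσpos : ∀ x, 0 < σ x)
    (hFε : ∀ e, HasDerivAt Fε (fε e) e)
    (hfεpos : ∀ e, 0 < fε e)
    (hAint : Integrable (fun x => v x * (σ x * gj x - g x * σj x) / σ x))
    (hBint : Integrable (fun x => v x * σj x / σ x)) :
    ∀ y : ℝ,
      (∫ x : Fin d → ℝ, v x *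
          (deriv (fun t => Fε ((h y - g (Function.update x j t)) / σ (Function.update x j t))) (x j)
            / deriv (fun t => Fε ((h t - g x) / σ x)) y))
      = -((∫ x : Fin d → ℝ, v x * (σ x * gj x - g x * σj x) / σ x)
          + (∫ x : Fin d → ℝ, v x * σj x / σ x) * h y) / h' y := by
  intro y
  have hratio : ∀ x : Fin d → ℝ, v x *
      (deriv (fun t => Fε ((h y - g (Function.update x j t)) / σ (Function.update x j t))) (x j)
        / deriv (fun t => Fε ((h t - g x) / σ x)) y)
      = -(v x * (σ x * gj x - g x * σj x) / σ x + v x * σj x / σ x * h y) / h' y := by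
    intro x
    have hσ : σ (Function.update x j (x j)) ≠ 0 := (hσpos _).ne'
    have hquot := deriv_div_deriv_comp_sub_div (hFε _) (hfεpos _).ne' (hderiv y) (hgj x) (hσj x) hσ
    simp only [Function.update_eq_self] at hquot
    rw [hquot]
    ring
  simp_rw [hratio]
  rw [integral_div, integral_neg, integral_add hAint (hBint.mul_const _), integral_mul_const]

theorem stmt4 {d : ℕ} (j : Fin d)
    (h h' : ℝ → ℝ) (g σ : (Fin d → ℝ) → ℝ)
    (gj σj : (Fin d → ℝ) → ℝ) (Fε fε : ℝ → ℝ) (v : (Fin d → ℝ) → ℝ)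
    (hderiv : ∀ y, HasDerivAt h (h' y) y) (hcont : Continuous h')
    (hpos : ∀ y, 0 < h' y)
    (hgj : ∀ x : Fin d → ℝ, HasDerivAt (fun t => g (Function.update x j t)) (gj x) (x j))
    (hσj : ∀ x : Fin d → ℝ, HasDerivAt (fun t => σ (Function.update x j t)) (σj x) (x j))
    (hσpos : ∀ x, 0 < σ x)
    (hFε : ∀ e, HasDerivAt Fε (fε e) e) (hfεcont : Continuous fε)
    (hfεpos : ∀ e, 0 < fε e)
    (hv : ∀ x, 0 ≤ v x) (hvint : Integrable v)
    (hAint : Integrable (fun x => v x * (σ x * gj x - g x * σj x) / σ x))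
    (hBint : Integrable (fun x => v x * σj x / σ x)) :
    ∀ y : ℝ,
      (∫ x : Fin d → ℝ, v x *
          (deriv (fun t => Fε ((h y - g (Function.update x j t)) / σ (Function.update x j t))) (x j)
            / deriv (fun t => Fε ((h t - g x) / σ x)) y))
      = -((∫ x : Fin d → ℝ, v x * (σ x * gj x - g x * σj x) / σ x)
          + (∫ x : Fin d → ℝ, v x * σj x / σ x) * h y) / h' y :=
  stmt4_general j h h' g σ gj σj Fε fε v hderiv hgj hσj hσpos hFε hfεpos hAint hBint
end

section
/- Let f : [a, b] → ℝ be twice differentiable with ‖f‖_∞ ≤ δ and ‖f''‖_∞ ≤ M on [a, b], where b - a > 0. Then ‖f'‖_∞ ≤ 2δ/(b - a) + 2·√(M·δ). (Consequently, if h̃, h ∈ C²([a,b]) have second derivatives bounded by a common constant and ‖h̃ - h‖_∞ ≤ δ, then ‖h̃' - h'‖_∞ = O(√δ).) -/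
/-!
Taylor's theorem with the remainder bound `|f y - f x - f' x (y - x)| ≤ M (y - x)² / 2`, used at
the two ends of a window `[u, u + t] ⊆ [a, b]` containing `x`, gives
`t |f' x| ≤ |f (u + t) - f u| + M t² / 2 ≤ 2 δ + M t² / 2` for every `t ∈ (0, b - a]`.
Taking `t = 2 √(δ / M)` when this is at most `b - a` (letting `t → 0` if `δ = 0`), and `t = b - a`
otherwise, gives the bound.
The remainder bound itself holds because `f t - f' x t ∓ M (t - x)² / 2` has its maximum
(resp. minimum) at `t = x`, by the sign of its derivative.
-/

open Set Filter Topology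

theorem Convex.le_of_forall_sub_mul_deriv_nonpos {s : Set ℝ} (hs : Convex ℝ s) {φ φ' : ℝ → ℝ}
    {x y : ℝ} (hφ : ∀ t ∈ s, HasDerivWithinAt φ (φ' t) s t)
    (hsign : ∀ t ∈ s, (t - x) * φ' t ≤ 0) (hx : x ∈ s) (hy : y ∈ s) : φ y ≤ φ x := by
  have hcont : ∀ D ⊆ s, ContinuousOn φ D := fun D hD t ht =>
    (hφ t (hD ht)).continuousWithinAt.mono hD
  have hderiv : ∀ D ⊆ s, ∀ t ∈ interior D, HasDerivWithinAt φ (φ' t) (interior D) t :=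
    fun D hD t ht => (hφ t (hD (interior_subset ht))).mono (interior_subset.trans hD)
  rcases le_total x y with hxy | hyx
  · refine antitoneOn_of_hasDerivWithinAt_nonpos (hs.inter (convex_Ici x))
      (hcont _ inter_subset_left) (hderiv _ inter_subset_left) (fun t ht => ?_)
      ⟨hx, self_mem_Ici⟩ ⟨hy, hxy⟩ hxy
    have hxt : x < t := by
      simpa using interior_mono inter_subset_right ht
    exact nonpos_of_mul_nonpos_right (hsign t (interior_subset ht).1) (sub_pos.2 hxt)
  · refine monotoneOn_of_hasDerivWithinAt_nonneg (hs.inter (convex_Iic x))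
      (hcont _ inter_subset_left) (hderiv _ inter_subset_left) (fun t ht => ?_)
      ⟨hy, hyx⟩ ⟨hx, self_mem_Iic⟩ hyx
    have htx : t < x := by
      simpa using interior_mono inter_subset_right ht
    exact nonneg_of_mul_nonpos_right (hsign t (interior_subset ht).1) (sub_neg.2 htx)

theorem Convex.sub_sub_mul_le_of_abs_deriv_sub_le {s : Set ℝ} (hs : Convex ℝ s)
    {f f' : ℝ → ℝ} {M x y : ℝ} (hf : ∀ t ∈ s, HasDerivWithinAt f (f' t) s t)
    (hf' : ∀ t ∈ s, |f' t - f' x| ≤ M * |t - x|) (hx : x ∈ s) (hy : y ∈ s) :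
    f y - f x - f' x * (y - x) ≤ M * (y - x) ^ 2 / 2 := by
  have hφ : ∀ t ∈ s, HasDerivWithinAt (fun t => f t - f' x * t - M * (t - x) ^ 2 / 2)
      (f' t - f' x - M * (t - x)) s t := fun t ht => by
    have hid := hasDerivWithinAt_id t s
    refine (((hf t ht).sub (hid.const_mul (f' x))).sub
      (((hid.sub_const x).pow 2).const_mul M |>.div_const 2)).congr_deriv ?_
    norm_num
    ring
  have hsign : ∀ t ∈ s, (t - x) * (f' t - f' x - M * (t - x)) ≤ 0 := fun t ht => by
    have h1 := le_abs_self ((t - x) * (f' t - f' x))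
    have h2 := mul_le_mul_of_nonneg_left (hf' t ht) (abs_nonneg (t - x))
    rw [abs_mul] at h1
    rw [mul_left_comm, ← sq, sq_abs] at h2
    linarith
  have := hs.le_of_forall_sub_mul_deriv_nonpos hφ hsign hx hy
  simp only [sub_self, ne_eq, OfNat.ofNat_ne_zero, not_false_eq_true, zero_pow, mul_zero,
    zero_div, sub_zero] at this
  linarith

theorem Convex.abs_sub_sub_mul_le_of_abs_deriv2_le {s : Set ℝ} (hs : Convex ℝ s)
    {f f' f'' : ℝ → ℝ} {M x y : ℝ} (hf : ∀ t ∈ s, HasDerivWithinAt f (f' t) s t)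
    (hf' : ∀ t ∈ s, HasDerivWithinAt f' (f'' t) s t) (hf'' : ∀ t ∈ s, |f'' t| ≤ M)
    (hx : x ∈ s) (hy : y ∈ s) :
    |f y - f x - f' x * (y - x)| ≤ M * (y - x) ^ 2 / 2 := by
  have hlip : ∀ t ∈ s, |f' t - f' x| ≤ M * |t - x| := fun t ht =>
    hs.norm_image_sub_le_of_norm_hasDerivWithin_le hf' hf'' hx ht
  have upper := hs.sub_sub_mul_le_of_abs_deriv_sub_le hf hlip hx hy
  have lower := hs.sub_sub_mul_le_of_abs_deriv_sub_le (f := -f) (f' := -f') (M := M)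
    (fun t ht => (hf t ht).neg)
    (fun t ht => by simpa only [Pi.neg_apply, neg_sub_neg, abs_sub_comm (f' x)] using hlip t ht)
    hx hy
  simp only [Pi.neg_apply] at lower
  rw [abs_le]
  constructor <;> linarith

theorem abs_le_of_abs_sub_sub_mul_le {f : ℝ → ℝ} {a b c x δ M t : ℝ}
    (hf : ∀ y ∈ Icc a b, |f y| ≤ δ) (hx : x ∈ Icc a b)
    (hrem : ∀ y ∈ Icc a b, |f y - f x - c * (y - x)| ≤ M * (y - x) ^ 2 / 2) (hM : 0 ≤ M)
    (ht : t ∈ Ioc 0 (b - a)) : |c| ≤ 2 * δ / t + M * t / 2 := by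
  obtain ⟨ht₀, htL⟩ := ht
  set u := min x (b - t) with hu_def
  have hux : u ≤ x := min_le_left _ _
  have hxv : x ≤ u + t := by
    rw [hu_def, ← min_add_add_right, sub_add_cancel]
    exact le_min (by linarith) hx.2
  have hu : u ∈ Icc a b := ⟨le_min hx.1 (by linarith), by linarith [hx.2]⟩
  have hv : u + t ∈ Icc a b := ⟨by linarith [hu.1], by linarith [min_le_right x (b - t)]⟩
  have hsq : M * ((u + t - x) ^ 2 + (u - x) ^ 2) ≤ M * t ^ 2 :=
    mul_le_mul_of_nonneg_left (by nlinarith) hM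
  have hct : |c * t| ≤ 2 * δ + M * t ^ 2 / 2 := by
    have := abs_le.1 (hf u hu); have := abs_le.1 (hf _ hv)
    have := abs_le.1 (hrem u hu); have := abs_le.1 (hrem _ hv)
    rw [abs_le]; constructor <;> linarith
  rw [abs_mul, abs_of_pos ht₀] at hct
  rw [show 2 * δ / t + M * t / 2 = (2 * δ + M * t ^ 2 / 2) / t by field_simp]
  exact (le_div_iff₀ ht₀).2 hct

theorem le_div_add_two_mul_sqrt_of_forall_le {c δ M L : ℝ} (hδ : 0 ≤ δ) (hM : 0 ≤ M)
    (hL : 0 < L) (h : ∀ t ∈ Ioc 0 L, c ≤ 2 * δ / t + M * t / 2) :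
    c ≤ 2 * δ / L + 2 * √(M * δ) := by
  have hsqrt : 0 ≤ √(M * δ) := Real.sqrt_nonneg _
  have hδL : 0 ≤ 2 * δ / L := by positivity
  rcases le_or_gt (M * L ^ 2) (4 * δ) with hsmall | hlarge
  · have hML : M * L / 2 ≤ √(M * δ) := Real.le_sqrt_of_sq_le (by nlinarith)
    linarith [h L ⟨hL, le_rfl⟩]
  rcases hδ.eq_or_lt with rfl | hδ₀
  · have hlim : Tendsto (fun t : ℝ => 2 * 0 / t + M * t / 2) (𝓝[>] 0) (𝓝 0) := by
      have : Tendsto (fun t : ℝ => M * t / 2) (𝓝 0) (𝓝 0) := by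
        simpa using ((tendsto_id (x := 𝓝 (0 : ℝ))).const_mul M).div_const 2
      simpa using this.mono_left nhdsWithin_le_nhds
    simpa using ge_of_tendsto hlim (eventually_of_mem (Ioc_mem_nhdsGT hL) h)
  -- the minimiser `2 δ / √(M δ) = 2 √(δ / M)` of `2 δ / t + M t / 2` lies in `(0, L]`
  have hM₀ : 0 < M := by nlinarith
  have hr : 0 < √(M * δ) := by positivity
  have hr2 : √(M * δ) ^ 2 = M * δ := Real.sq_sqrt (by positivity)
  set r := √(M * δ)
  have htL : 2 * δ / r ≤ L := by
    rw [div_le_iff₀ hr]; nlinarith [mul_pos hL hr, mul_lt_mul_of_pos_right hlarge hδ₀]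
  have := h _ ⟨by positivity, htL⟩
  have heq : 2 * δ / (2 * δ / r) + M * (2 * δ / r) / 2 = 2 * r := by
    field_simp
    linear_combination -hr2
  linarith

theorem stmt8 (a b δ M : ℝ) (hab : a < b) (hδ : 0 ≤ δ) (hM : 0 ≤ M)
    (f f' f'' : ℝ → ℝ)
    (hd1 : ∀ x ∈ Set.Icc a b, HasDerivWithinAt f (f' x) (Set.Icc a b) x)
    (hd2 : ∀ x ∈ Set.Icc a b, HasDerivWithinAt f' (f'' x) (Set.Icc a b) x)
    (hf : ∀ x ∈ Set.Icc a b, |f x| ≤ δ)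
    (hf'' : ∀ x ∈ Set.Icc a b, |f'' x| ≤ M) :
    ∀ x ∈ Set.Icc a b, |f' x| ≤ 2 * δ / (b - a) + 2 * Real.sqrt (M * δ) := by
  intro x hx
  have hrem : ∀ y ∈ Icc a b, |f y - f x - f' x * (y - x)| ≤ M * (y - x) ^ 2 / 2 :=
    fun y hy => (convex_Icc a b).abs_sub_sub_mul_le_of_abs_deriv2_le hd1 hd2 hf'' hx hy
  exact le_div_add_two_mul_sqrt_of_forall_le hδ hM (sub_pos.2 hab)
    fun t ht => abs_le_of_abs_sub_sub_mul_le hf hx hrem hM ht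
end

section
/- Let X be a random vector with density f_X on ℝ^d, let ε be a real random variable independent of X with distribution function F_ε, let M ⊆ ℝ^d be measurable with P(X ∈ M) > 0, and let k : ℝ^d → ℝ be measurable. Then for every x ∈ ℝ^d, P(X ≤ x, ε ≤ k(X) | X ∈ M) - P(X ≤ x | X ∈ M)·P(ε ≤ k(X) | X ∈ M) = (1/P(X ∈ M))·∫_M (1_{w ≤ x} - P(X ≤ x | X ∈ M))·f_X(w)·F_ε(k(w)) dw, where the inequality w ≤ x is componentwise. -/
open MeasureTheory ProbabilityTheory

/-! Independence makes the law of `(X, ε)` the product of the marginals, so by Tonelli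
`P(X ∈ A, ε ≤ k X) = ∫_A f_X · F_ε ∘ k` for every measurable `A`. Taking `A = {w ≤ x} ∩ M` and
`A = M`, the claimed identity is linearity of the integral over `M`. -/

theorem ProbabilityTheory.IndepFun.measure_prodMk_preimage {Ω α β : Type*} [MeasurableSpace Ω]
    [MeasurableSpace α] [MeasurableSpace β] {μ : Measure Ω} [IsFiniteMeasure μ]
    {X : Ω → α} {Y : Ω → β} (hX : Measurable X) (hY : Measurable Y) (hXY : IndepFun X Y μ)
    {S : Set (α × β)} (hS : MeasurableSet S) :
    μ ((fun ω => (X ω, Y ω)) ⁻¹' S) = ∫⁻ w, μ (Y ⁻¹' (Prod.mk w ⁻¹' S)) ∂(μ.map X) := by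
  rw [← Measure.map_apply (hX.prodMk hY) hS,
    hXY.map_prod_eq_prod_map_map hX.aemeasurable hY.aemeasurable, Measure.prod_apply hS]
  exact lintegral_congr fun w => Measure.map_apply hY (measurable_prodMk_left hS)

theorem ProbabilityTheory.IndepFun.measure_mem_and_le_comp {Ω α : Type*} [MeasurableSpace Ω]
    [MeasurableSpace α] {μ : Measure Ω} [IsFiniteMeasure μ] {X : Ω → α} {ε : Ω → ℝ} {k : α → ℝ}
    (hX : Measurable X) (hε : Measurable ε) (hk : Measurable k) (hXε : IndepFun X ε μ)
    {A : Set α} (hA : MeasurableSet A) :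
    μ {ω | X ω ∈ A ∧ ε ω ≤ k (X ω)} = ∫⁻ w in A, μ {ω | ε ω ≤ k w} ∂(μ.map X) := by
  have hS : MeasurableSet {p : α × ℝ | p.1 ∈ A ∧ p.2 ≤ k p.1} :=
    (hA.preimage measurable_fst).inter (measurableSet_le measurable_snd (hk.comp measurable_fst))
  rw [← lintegral_indicator hA]
  refine (hXε.measure_prodMk_preimage hX hε hS).trans (lintegral_congr fun w => ?_)
  by_cases hw : w ∈ A <;> simp [hw, Set.preimage]

theorem integral_indicator_one_sub_mul {α : Type*} [MeasurableSpace α] {m : Measure α}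
    {Q M : Set α} {g : α → ℝ} (hQ : MeasurableSet Q) (hg : IntegrableOn g M m) (c : ℝ) :
    ∫ w in M, (Q.indicator (fun _ => (1 : ℝ)) w - c) * g w ∂m
      = ∫ w in Q ∩ M, g w ∂m - c * ∫ w in M, g w ∂m := by
  simp_rw [sub_mul, ← Set.indicator_mul_left, one_mul]
  rw [integral_sub (hg.indicator hQ) (hg.const_mul c), integral_indicator hQ,
    Measure.restrict_restrict hQ, integral_const_mul]

theorem measure_mem_and_le_comp_eq_setLIntegral_density {Ω α : Type*} [MeasurableSpace Ω]
    [MeasurableSpace α] {μ : Measure Ω} [IsFiniteMeasure μ] {ν : Measure α} {X : Ω → α}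
    {ε : Ω → ℝ} {k f : α → ℝ} {F : ℝ → ℝ} (hX : Measurable X) (hε : Measurable ε)
    (hk : Measurable k) (hf : Measurable f) (hf0 : ∀ w, 0 ≤ f w)
    (hdens : μ.map X = ν.withDensity fun w => ENNReal.ofReal (f w)) (hXε : IndepFun X ε μ)
    (hF : ∀ e, F e = (μ {ω | ε ω ≤ e}).toReal) {A : Set α} (hA : MeasurableSet A) :
    μ {ω | X ω ∈ A ∧ ε ω ≤ k (X ω)} = ∫⁻ w in A, ENNReal.ofReal (f w * F (k w)) ∂ν := by
  have hF_ofReal (e : ℝ) : ENNReal.ofReal (F e) = μ {ω | ε ω ≤ e} := by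
    rw [hF, ENNReal.ofReal_toReal (measure_ne_top _ _)]
  have hmono : Monotone fun e => μ {ω | ε ω ≤ e} := fun a b hab =>
    measure_mono fun ω h => le_trans h hab
  simp_rw [ENNReal.ofReal_mul (hf0 _), hF_ofReal]
  rw [hXε.measure_mem_and_le_comp hX hε hk hA, hdens]
  exact setLIntegral_withDensity_eq_setLIntegral_mul _ hf.ennreal_ofReal
    (hmono.measurable.comp hk) hA

theorem stmt10_general {Ω : Type*} [MeasurableSpace Ω] (μ : Measure Ω) [IsProbabilityMeasure μ]
    {d : ℕ} (X : Ω → (Fin d → ℝ)) (ε : Ω → ℝ)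
    (fX : (Fin d → ℝ) → ℝ) (Fε : ℝ → ℝ)
    (k : (Fin d → ℝ) → ℝ) (M : Set (Fin d → ℝ))
    (hX : Measurable X) (hε : Measurable ε)
    (hfX : Measurable fX) (hfX0 : ∀ w, 0 ≤ fX w)
    (hk : Measurable k) (hM : MeasurableSet M)
    (hdens : Measure.map X μ = volume.withDensity (fun w => ENNReal.ofReal (fX w)))
    (hindep : IndepFun X ε μ)
    (hcdf : ∀ e, Fε e = (μ {ω | ε ω ≤ e}).toReal) :
    ∀ x : Fin d → ℝ,
      (μ {ω | X ω ≤ x ∧ ε ω ≤ k (X ω) ∧ X ω ∈ M}).toReal / (μ {ω | X ω ∈ M}).toReal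
        - ((μ {ω | X ω ≤ x ∧ X ω ∈ M}).toReal / (μ {ω | X ω ∈ M}).toReal)
          * ((μ {ω | ε ω ≤ k (X ω) ∧ X ω ∈ M}).toReal / (μ {ω | X ω ∈ M}).toReal)
      = (1 / (μ {ω | X ω ∈ M}).toReal) *
          ∫ w in M,
            (Set.indicator {w' : Fin d → ℝ | w' ≤ x} (fun _ => (1 : ℝ)) w
              - (μ {ω | X ω ≤ x ∧ X ω ∈ M}).toReal / (μ {ω | X ω ∈ M}).toReal)
            * fX w * Fε (k w) := by
  intro x
  set g := fun w => fX w * Fε (k w)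
  have hFε : Monotone Fε := fun a b hab => by
    simp only [hcdf]
    exact ENNReal.toReal_mono (measure_ne_top _ _) (measure_mono fun ω h => le_trans h hab)
  have hg : Measurable g := hfX.mul (hFε.measurable.comp hk)
  have hg0 : 0 ≤ᵐ[volume] g := .of_forall fun w => mul_nonneg (hfX0 w) (by
    rw [hcdf]; positivity)
  have hlin {A : Set (Fin d → ℝ)} (hA : MeasurableSet A) :
      μ {ω | X ω ∈ A ∧ ε ω ≤ k (X ω)} = ∫⁻ w in A, ENNReal.ofReal (g w) :=
    measure_mem_and_le_comp_eq_setLIntegral_density hX hε hk hfX hfX0 hdens hindep hcdf hA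
  have hint : IntegrableOn g M := ⟨hg.aestronglyMeasurable, by
    rw [hasFiniteIntegral_iff_ofReal (ae_restrict_of_ae hg0), ← hlin hM]
    exact measure_lt_top _ _⟩
  have hreal {A : Set (Fin d → ℝ)} (hA : MeasurableSet A) :
      (μ {ω | X ω ∈ A ∧ ε ω ≤ k (X ω)}).toReal = ∫ w in A, g w := by
    rw [integral_eq_lintegral_of_nonneg_ae (ae_restrict_of_ae hg0) hg.aestronglyMeasurable, hlin hA]
  simp_rw [mul_assoc]
  have hjoint : {ω | X ω ≤ x ∧ ε ω ≤ k (X ω) ∧ X ω ∈ M}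
      = {ω | X ω ∈ {w | w ≤ x} ∩ M ∧ ε ω ≤ k (X ω)} := by
    ext; simp only [Set.mem_ofPred_eq, Set.mem_inter_iff]; tauto
  have hmarg : {ω | ε ω ≤ k (X ω) ∧ X ω ∈ M} = {ω | X ω ∈ M ∧ ε ω ≤ k (X ω)} := by
    simp_rw [and_comm]
  rw [integral_indicator_one_sub_mul (Q := {w | w ≤ x}) measurableSet_Iic hint, hjoint, hmarg,
    hreal hM, hreal (A := {w | w ≤ x} ∩ M) (measurableSet_Iic.inter hM)]
  ring

theorem stmt10 {Ω : Type*} [MeasurableSpace Ω] (μ : Measure Ω) [IsProbabilityMeasure μ]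
    {d : ℕ} (X : Ω → (Fin d → ℝ)) (ε : Ω → ℝ)
    (fX : (Fin d → ℝ) → ℝ) (Fε : ℝ → ℝ)
    (k : (Fin d → ℝ) → ℝ) (M : Set (Fin d → ℝ))
    (hX : Measurable X) (hε : Measurable ε)
    (hfX : Measurable fX) (hfX0 : ∀ w, 0 ≤ fX w)
    (hk : Measurable k) (hM : MeasurableSet M)
    (hdens : Measure.map X μ = volume.withDensity (fun w => ENNReal.ofReal (fX w)))
    (hindep : IndepFun X ε μ)
    (hcdf : ∀ e, Fε e = (μ {ω | ε ω ≤ e}).toReal)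
    (hMpos : 0 < (μ {ω | X ω ∈ M}).toReal) :
    ∀ x : Fin d → ℝ,
      (μ {ω | X ω ≤ x ∧ ε ω ≤ k (X ω) ∧ X ω ∈ M}).toReal / (μ {ω | X ω ∈ M}).toReal
        - ((μ {ω | X ω ≤ x ∧ X ω ∈ M}).toReal / (μ {ω | X ω ∈ M}).toReal)
          * ((μ {ω | ε ω ≤ k (X ω) ∧ X ω ∈ M}).toReal / (μ {ω | X ω ∈ M}).toReal)
      = (1 / (μ {ω | X ω ∈ M}).toReal) *
          ∫ w in M,
            (Set.indicator {w' : Fin d → ℝ | w' ≤ x} (fun _ => (1 : ℝ)) w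
              - (μ {ω | X ω ≤ x ∧ X ω ∈ M}).toReal / (μ {ω | X ω ∈ M}).toReal)
            * fX w * Fε (k w) :=
  stmt10_general μ X ε fX Fε k M hX hε hfX hfX0 hk hM hdens hindep hcdf
end

section
/- Let λ : ℝ → ℝ be continuously differentiable with λ(y₀) = 0 and λ'(y₀) = -B ≠ 0, and assume λ is nonzero on (y₀, y₁] and on [y₂, y₀). If h is defined for y > y₀ by h(y) = exp(-B·∫_{y₁}^y du/λ(u)) and for y < y₀ by h(y) = α₂·exp(-B·∫_{y₂}^y du/λ(u)) with h(y₀) := 0, and if h is differentiable at y₀ with lim_{y↓y₀} h'(y) = lim_{y↑y₀} h'(y) ≠ 0, then necessarily α₂ = -lim_{t↓0} exp(B·(∫_{y₂}^{y₀-t} du/λ(u) - ∫_{y₁}^{y₀+t} du/λ(u))). -/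
open MeasureTheory Filter

theorem stmt15 (lam lam' h : ℝ → ℝ) (B α₂ y₀ y₁ y₂ L : ℝ)
    (hy₂ : y₂ < y₀) (hy₁ : y₀ < y₁) (hB : B ≠ 0)
    (hd : ∀ y, HasDerivAt lam (lam' y) y) (hc : Continuous lam')
    (h0 : lam y₀ = 0) (h1 : lam' y₀ = -B)
    (hnz1 : ∀ u ∈ Set.Ioc y₀ y₁, lam u ≠ 0)
    (hnz2 : ∀ u ∈ Set.Ico y₂ y₀, lam u ≠ 0)
    (hdef1 : ∀ y, y₀ < y → h y = Real.exp (-B * ∫ u in y₁..y, 1 / lam u))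
    (hdef2 : ∀ y, y < y₀ → h y = α₂ * Real.exp (-B * ∫ u in y₂..y, 1 / lam u))
    (hdef0 : h y₀ = 0)
    (hL : L ≠ 0) (hder : HasDerivAt h L y₀)
    (hlim1 : Tendsto (deriv h) (nhdsWithin y₀ (Set.Ioi y₀)) (nhds L))
    (hlim2 : Tendsto (deriv h) (nhdsWithin y₀ (Set.Iio y₀)) (nhds L)) :
    Tendsto
      (fun t : ℝ =>
        -Real.exp (B * ((∫ u in y₂..(y₀ - t), 1 / lam u) - ∫ u in y₁..(y₀ + t), 1 / lam u)))
      (nhdsWithin 0 (Set.Ioi 0)) (nhds α₂) := by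
  have hslope : Tendsto (slope h y₀) (nhdsWithin y₀ {y₀}ᶜ) (nhds L) :=
    hasDerivAt_iff_tendsto_slope.mp hder
  have hmapm : Tendsto (fun t : ℝ => y₀ - t) (nhdsWithin 0 (Set.Ioi 0))
      (nhdsWithin y₀ {y₀}ᶜ) := by
    rw [tendsto_nhdsWithin_iff]
    constructor
    · have : Tendsto (fun t : ℝ => y₀ - t) (nhds 0) (nhds (y₀ - 0)) :=
        tendsto_const_nhds.sub tendsto_id
      simpa using this.mono_left nhdsWithin_le_nhds
    · filter_upwards [self_mem_nhdsWithin] with t ht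
      simp only [Set.mem_compl_iff, Set.mem_singleton_iff]
      have : (0:ℝ) < t := ht
      intro hEq
      linarith [hEq]
  have hmapp : Tendsto (fun t : ℝ => y₀ + t) (nhdsWithin 0 (Set.Ioi 0))
      (nhdsWithin y₀ {y₀}ᶜ) := by
    rw [tendsto_nhdsWithin_iff]
    constructor
    · have : Tendsto (fun t : ℝ => y₀ + t) (nhds 0) (nhds (y₀ + 0)) :=
        tendsto_const_nhds.add tendsto_id
      simpa using this.mono_left nhdsWithin_le_nhds
    · filter_upwards [self_mem_nhdsWithin] with t ht
      simp only [Set.mem_compl_iff, Set.mem_singleton_iff]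
      have : (0:ℝ) < t := ht
      intro hEq
      linarith [hEq]
  have hSm : Tendsto (fun t => slope h y₀ (y₀ - t)) (nhdsWithin 0 (Set.Ioi 0)) (nhds L) :=
    hslope.comp hmapm
  have hSp : Tendsto (fun t => slope h y₀ (y₀ + t)) (nhdsWithin 0 (Set.Ioi 0)) (nhds L) :=
    hslope.comp hmapp
  have hα : α₂ ≠ 0 := by
    intro hα
    have hzero : (fun t => slope h y₀ (y₀ - t)) =ᶠ[nhdsWithin 0 (Set.Ioi 0)]
        (fun _ => (0:ℝ)) := by
      filter_upwards [self_mem_nhdsWithin] with t ht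
      have htpos : (0:ℝ) < t := ht
      have hlt : y₀ - t < y₀ := by linarith
      rw [slope_def_field, hdef2 _ hlt, hdef0, hα]
      simp
    have := hSm.congr' hzero
    exact hL (tendsto_nhds_unique this tendsto_const_nhds)
  have hquot : Tendsto (fun t => α₂ * (slope h y₀ (y₀ + t) / slope h y₀ (y₀ - t)))
      (nhdsWithin 0 (Set.Ioi 0)) (nhds (α₂ * (L / L))) :=
    tendsto_const_nhds.mul (hSp.div hSm hL)
  rw [div_self hL, mul_one] at hquot
  refine hquot.congr' ?_
  filter_upwards [self_mem_nhdsWithin] with t ht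
  have htpos : (0:ℝ) < t := ht
  have hlt : y₀ - t < y₀ := by linarith
  have hgt : y₀ < y₀ + t := by linarith
  rw [slope_def_field, slope_def_field, hdef2 _ hlt, hdef1 _ hgt, hdef0]
  set A₁ := ∫ u in y₁..(y₀ + t), 1 / lam u with hA₁
  set A₂ := ∫ u in y₂..(y₀ - t), 1 / lam u with hA₂
  have key : Real.exp (B * (A₂ - A₁)) = Real.exp (-B * A₁) / Real.exp (-B * A₂) := by
    rw [eq_div_iff (Real.exp_ne_zero _), ← Real.exp_add]; ring_nf
  have ht' : t ≠ 0 := ne_of_gt htpos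
  have hE₂ : Real.exp (-B * A₂) ≠ 0 := Real.exp_ne_zero _
  have h2 : y₀ + t - y₀ = t := by ring
  have h3 : y₀ - t - y₀ = -t := by ring
  rw [key, h2, h3]
  field_simp
  ring
end
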